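/- Let A, B ∈ T(l×l×m, ℂ) be 3-way arrays with frontal slices A_1, …, A_m ∈ M(l, ℂ) and B_1, …, B_m ∈ M(l, ℂ), and assume that A_1, …, A_m are linearly independent and B_1, …, B_m are linearly independent. Define Â ∈ T((l+m)×(l+m)×(l+m), ℂ) by its frontal slices: Â_i = 0 for i ∈ [l], and for j ∈ [m], Â_{l+j} is the (l+m)×(l+m) block matrix with block (1,1) (of size l×l) equal to A_j and all other blocks zero; define B̂ analogously from B. Then there exist unitary matrices P ∈ U(l, ℂ) and Q ∈ U(m, ℂ) with Pᵗ A P = B^Q if and only if there exists a unitary matrix P ∈ U(l+m, ℂ) with Pᵗ Â P = B̂^{Pᵗ}. -/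
import Mathlib

open Matrix

noncomputable def algPad {l m : ℕ} (A : Fin m → Matrix (Fin l) (Fin l) ℂ) :
    Fin (l + m) → Matrix (Fin (l + m)) (Fin (l + m)) ℂ :=
  fun i => Matrix.of fun p q =>
    if h : l ≤ (i : ℕ) ∧ (p : ℕ) < l ∧ (q : ℕ) < l then
      A ⟨(i : ℕ) - l, by have := i.isLt; omega⟩ ⟨p, h.2.1⟩ ⟨q, h.2.2⟩
    else 0

lemma algPad_castAdd {l m : ℕ} (A : Fin m → Matrix (Fin l) (Fin l) ℂ) (k : Fin l) :
    algPad A (Fin.castAdd m k) = 0 := by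
  ext p q
  simp only [algPad, Matrix.of_apply, Matrix.zero_apply]
  rw [dif_neg (by simp)]

lemma algPad_natAdd_left {l m : ℕ} (A : Fin m → Matrix (Fin l) (Fin l) ℂ) (k : Fin (l+m))
    (p : Fin m) (q : Fin (l+m)) : algPad A k (Fin.natAdd l p) q = 0 := by
  simp only [algPad, Matrix.of_apply]
  rw [dif_neg (by simp)]

lemma algPad_natAdd_right {l m : ℕ} (A : Fin m → Matrix (Fin l) (Fin l) ℂ) (k : Fin (l+m))
    (p : Fin (l+m)) (q : Fin m) : algPad A k p (Fin.natAdd l q) = 0 := by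
  simp only [algPad, Matrix.of_apply]
  rw [dif_neg (by simp)]

lemma algPad_natAdd_apply {l m : ℕ} (A : Fin m → Matrix (Fin l) (Fin l) ℂ) (j : Fin m)
    (p q : Fin l) :
    algPad A (Fin.natAdd l j) (Fin.castAdd m p) (Fin.castAdd m q) = A j p q := by
  simp only [algPad, Matrix.of_apply]
  have hp : ((Fin.castAdd m p : Fin (l+m)) : ℕ) < l := by simpa using p.isLt
  have hq : ((Fin.castAdd m q : Fin (l+m)) : ℕ) < l := by simpa using q.isLt
  rw [dif_pos ⟨by simp, hp, hq⟩]
  have e1 : ∀ h, (⟨((Fin.natAdd l j : Fin (l+m)) : ℕ) - l, h⟩ : Fin m) = j :=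
    fun h => Fin.ext (by simp)
  have e2 : ∀ h, (⟨((Fin.castAdd m p : Fin (l+m)) : ℕ), h⟩ : Fin l) = p :=
    fun h => Fin.ext (by simp)
  have e3 : ∀ h, (⟨((Fin.castAdd m q : Fin (l+m)) : ℕ), h⟩ : Fin l) = q :=
    fun h => Fin.ext (by simp)
  rw [e1, e2, e3]

theorem stmt_10 (l m : ℕ) (A B : Fin m → Matrix (Fin l) (Fin l) ℂ)
    (hA : LinearIndependent ℂ A) (hB : LinearIndependent ℂ B) :
    (∃ P ∈ Matrix.unitaryGroup (Fin l) ℂ, ∃ Q ∈ Matrix.unitaryGroup (Fin m) ℂ,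
        ∀ k : Fin m, Pᵀ * A k * P = ∑ k' : Fin m, Q k' k • B k')
      ↔ (∃ P ∈ Matrix.unitaryGroup (Fin (l + m)) ℂ,
          ∀ k : Fin (l + m),
            Pᵀ * algPad A k * P = ∑ k' : Fin (l + m), Pᵀ k' k • algPad B k') := by
  constructor
  · rintro ⟨P, hP, Q, hQ, hPQ⟩
    have hP1 : P * star P = 1 := Matrix.mem_unitaryGroup_iff.mp hP
    have hQ1 : star Q * Q = 1 := Matrix.mem_unitaryGroup_iff'.mp hQ
    set Ph : Matrix (Fin (l+m)) (Fin (l+m)) ℂ := Matrix.of fun p =>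
      Fin.addCases (motive := fun _ => Fin (l+m) → ℂ)
        (fun p' => Fin.addCases (fun q' => P p' q') (fun _ => 0))
        (fun p' => Fin.addCases (fun _ => 0) (fun q' => Q q' p')) p with hPhdef
    have e11 : ∀ (p q : Fin l), Ph (Fin.castAdd m p) (Fin.castAdd m q) = P p q := by
      intro p q; simp [hPhdef]
    have e12 : ∀ (p : Fin l) (q : Fin m), Ph (Fin.castAdd m p) (Fin.natAdd l q) = 0 := by
      intro p q; simp [hPhdef]
    have e21 : ∀ (p : Fin m) (q : Fin l), Ph (Fin.natAdd l p) (Fin.castAdd m q) = 0 := by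
      intro p q; simp [hPhdef]
    have e22 : ∀ (p : Fin m) (q : Fin m), Ph (Fin.natAdd l p) (Fin.natAdd l q) = Q q p := by
      intro p q; simp [hPhdef]
    have hU : Ph ∈ Matrix.unitaryGroup (Fin (l+m)) ℂ := by
      rw [Matrix.mem_unitaryGroup_iff]
      ext p q
      rw [Matrix.mul_apply, Fin.sum_univ_add]
      induction p using Fin.addCases with
      | left p =>
        induction q using Fin.addCases with
        | left q =>
          have h := congrArg (fun M => M p q) hP1
          simp only [Matrix.mul_apply, Matrix.star_apply] at h
          simp only [Matrix.star_apply, e11, e12, mul_zero, zero_mul, star_zero,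
            Finset.sum_const_zero, add_zero]
          rw [h]
          simp [Matrix.one_apply, Fin.ext_iff]
        | right q =>
          simp only [Matrix.star_apply, e11, e12, e21, mul_zero, zero_mul, star_zero,
            Finset.sum_const_zero, add_zero]
          rw [Matrix.one_apply_ne (by simp [Fin.ext_iff]; omega)]
      | right p =>
        induction q using Fin.addCases with
        | left q =>
          simp only [Matrix.star_apply, e11, e12, e21, e22, mul_zero, zero_mul, star_zero,
            Finset.sum_const_zero, add_zero, zero_add]
          rw [Matrix.one_apply_ne (by simp [Fin.ext_iff]; omega)]
        | right q =>
          have h := congrArg (fun M => M p q) hQ1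
          simp only [Matrix.mul_apply, Matrix.star_apply] at h
          simp only [Matrix.star_apply, e21, e22, mul_zero, zero_mul, star_zero,
            Finset.sum_const_zero, zero_add]
          have h2 : (∑ r : Fin m, Q r p * star (Q r q)) = star ((1 : Matrix (Fin m) (Fin m) ℂ) p q) := by
            rw [← h, star_sum]
            refine Finset.sum_congr rfl (fun r _ => ?_)
            simp [mul_comm]
          rw [h2]
          simp [Matrix.one_apply, Fin.ext_iff, apply_ite (star : ℂ → ℂ)]
    refine ⟨Ph, hU, ?_⟩
    intro k
    induction k using Fin.addCases with
    | left k =>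
      rw [algPad_castAdd, Matrix.mul_zero, Matrix.zero_mul]
      symm
      rw [Fin.sum_univ_add]
      simp [algPad_castAdd, Matrix.transpose_apply, e12]
    | right k =>
      ext p q
      induction p using Fin.addCases with
      | left p =>
        induction q using Fin.addCases with
        | left q =>
          have h := congrArg (fun M => M p q) (hPQ k)
          simp only [Matrix.mul_apply, Matrix.sum_apply, Matrix.smul_apply,
            smul_eq_mul, Finset.sum_mul] at h
          simp only [Matrix.mul_apply, Matrix.transpose_apply, Matrix.sum_apply,
            Matrix.smul_apply, smul_eq_mul, Finset.sum_mul, Fin.sum_univ_add,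
            e11, e12, e21, e22, algPad_castAdd, algPad_natAdd_left, algPad_natAdd_right,
            algPad_natAdd_apply, Matrix.zero_apply, mul_zero, zero_mul,
            Finset.sum_const_zero, add_zero, zero_add]
          exact h
        | right q =>
          simp only [Matrix.mul_apply, Matrix.transpose_apply, Matrix.sum_apply,
            Matrix.smul_apply, smul_eq_mul, Finset.sum_mul, Fin.sum_univ_add,
            e11, e12, e21, e22, algPad_castAdd, algPad_natAdd_left, algPad_natAdd_right,
            algPad_natAdd_apply, Matrix.zero_apply, mul_zero, zero_mul,
            Finset.sum_const_zero, add_zero, zero_add]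
      | right p =>
        simp only [Matrix.mul_apply, Matrix.transpose_apply, Matrix.sum_apply,
            Matrix.smul_apply, smul_eq_mul, Finset.sum_mul, Fin.sum_univ_add,
            e11, e12, e21, e22, algPad_castAdd, algPad_natAdd_left, algPad_natAdd_right,
            algPad_natAdd_apply, Matrix.zero_apply, mul_zero, zero_mul,
            Finset.sum_const_zero, add_zero, zero_add]
  · rintro ⟨Ph, hPh, hEq⟩
    have hPh1 : Ph * star Ph = 1 := Matrix.mem_unitaryGroup_iff.mp hPh
    have hPh2 : star Ph * Ph = 1 := Matrix.mem_unitaryGroup_iff'.mp hPh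
    have h12 : ∀ (i : Fin l) (j : Fin m), Ph (Fin.castAdd m i) (Fin.natAdd l j) = 0 := by
      intro i j
      have h0 := hEq (Fin.castAdd m i)
      rw [algPad_castAdd, Matrix.mul_zero, Matrix.zero_mul] at h0
      have hsum : ∑ j' : Fin m, Ph (Fin.castAdd m i) (Fin.natAdd l j') • B j' = 0 := by
        ext p q
        have h1 := congrArg (fun M => M (Fin.castAdd m p) (Fin.castAdd m q)) h0
        simp only [Matrix.sum_apply, Matrix.smul_apply, smul_eq_mul, Fin.sum_univ_add,
          Matrix.transpose_apply, algPad_castAdd, algPad_natAdd_apply, Matrix.zero_apply,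
          mul_zero, Finset.sum_const_zero, zero_add] at h1
        simp only [Matrix.sum_apply, Matrix.smul_apply, smul_eq_mul, Matrix.zero_apply]
        exact h1.symm
      exact linearIndependent_iff'.mp hB Finset.univ _ hsum j (Finset.mem_univ j)
    set P : Matrix (Fin l) (Fin l) ℂ :=
      Matrix.of (fun p q : Fin l => Ph (Fin.castAdd m p) (Fin.castAdd m q)) with hPdef
    set Q : Matrix (Fin m) (Fin m) ℂ :=
      Matrix.of (fun j k : Fin m => Ph (Fin.natAdd l k) (Fin.natAdd l j)) with hQdef
    have hPU : P ∈ Matrix.unitaryGroup (Fin l) ℂ := by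
      rw [Matrix.mem_unitaryGroup_iff]
      ext p q
      have h1 := congrArg (fun M => M (Fin.castAdd m p) (Fin.castAdd m q)) hPh1
      simp only [Matrix.mul_apply, Matrix.star_apply, Fin.sum_univ_add, h12, zero_mul,
        star_zero, mul_zero, Finset.sum_const_zero, add_zero] at h1
      rw [Matrix.mul_apply]
      simp only [Matrix.star_apply, hPdef, Matrix.of_apply]
      rw [h1]
      simp [Matrix.one_apply, Fin.ext_iff]
    have hQU : Q ∈ Matrix.unitaryGroup (Fin m) ℂ := by
      rw [Matrix.mem_unitaryGroup_iff]
      ext p q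
      have h1 := congrArg (fun M => M (Fin.natAdd l p) (Fin.natAdd l q)) hPh2
      simp only [Matrix.mul_apply, Matrix.star_apply, Fin.sum_univ_add, h12, star_zero,
        zero_mul, Finset.sum_const_zero, zero_add] at h1
      rw [Matrix.mul_apply]
      simp only [Matrix.star_apply, hQdef, Matrix.of_apply]
      have h2 : ∑ r : Fin m, Ph (Fin.natAdd l r) (Fin.natAdd l p) *
          star (Ph (Fin.natAdd l r) (Fin.natAdd l q)) =
          star ((1 : Matrix (Fin (l+m)) (Fin (l+m)) ℂ) (Fin.natAdd l p) (Fin.natAdd l q)) := by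
        rw [← h1, star_sum]
        refine Finset.sum_congr rfl fun r _ => ?_
        simp [mul_comm]
      rw [h2]
      simp [Matrix.one_apply, Fin.ext_iff, apply_ite (star : ℂ → ℂ)]
    refine ⟨P, hPU, Q, hQU, ?_⟩
    intro k
    ext p q
    have h1 := congrArg (fun M => M (Fin.castAdd m p) (Fin.castAdd m q)) (hEq (Fin.natAdd l k))
    simp only [Matrix.mul_apply, Matrix.transpose_apply, Matrix.sum_apply, Matrix.smul_apply,
      smul_eq_mul, Finset.sum_mul, Fin.sum_univ_add, algPad_castAdd, algPad_natAdd_left,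
      algPad_natAdd_right, algPad_natAdd_apply, Matrix.zero_apply, mul_zero, zero_mul,
      Finset.sum_const_zero, add_zero, zero_add, h12] at h1
    simp only [Matrix.mul_apply, Matrix.transpose_apply, Matrix.sum_apply, Matrix.smul_apply,
      smul_eq_mul, Finset.sum_mul, hPdef, hQdef, Matrix.of_apply]
    exact h1
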